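/- Let A = diag(a_1,...,a_k) be a positive definite diagonal matrix and y ∈ ℝ^k. The minimizer u of (1/2)‖Au − y‖² over the unit simplex {u ∈ ℝ^k : u_i ≥ 0, Σ u_i = 1} is given componentwise by u_i = max((a_i y_i − λ)/a_i², 0), where λ is the unique real number satisfying Σ_{i=1}^k max((a_i y_i − λ)/a_i², 0) = 1. -/

import Mathlib

/-- Preconditioned projection onto the unit simplex: for a positive definite
diagonal matrix `A = diag a`, the minimizer of `(1/2)‖Au - y‖²` over the unit
simplex is `u i = max ((a i * y i - λ)/(a i)^2) 0`, where `λ` satisfies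
`∑ i, max ((a i * y i - λ)/(a i)^2) 0 = 1`. -/
theorem preconditioned_simplex_projection (k : ℕ) (a y : Fin k → ℝ)
    (ha : ∀ i, 0 < a i) (lam : ℝ)
    (hlam : ∑ i, max ((a i * y i - lam) / (a i) ^ 2) 0 = 1)
    (u : Fin k → ℝ) (hu : ∀ i, u i = max ((a i * y i - lam) / (a i) ^ 2) 0) :
    ((∀ i, 0 ≤ u i) ∧ ∑ i, u i = 1) ∧
    (∀ v : Fin k → ℝ, (∀ i, 0 ≤ v i) → ∑ i, v i = 1 →
      (1 / 2) * ∑ i, (a i * u i - y i) ^ 2 ≤ (1 / 2) * ∑ i, (a i * v i - y i) ^ 2) ∧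
    (∀ v : Fin k → ℝ, (∀ i, 0 ≤ v i) → ∑ i, v i = 1 →
      (∀ w : Fin k → ℝ, (∀ i, 0 ≤ w i) → ∑ i, w i = 1 →
        (1 / 2) * ∑ i, (a i * v i - y i) ^ 2 ≤ (1 / 2) * ∑ i, (a i * w i - y i) ^ 2) →
      v = u) := by
  have hnn : ∀ i, 0 ≤ u i := fun i => (hu i) ▸ le_max_right _ _
  have hsum : ∑ i, u i = 1 := by simp_rw [hu]; exact hlam
  -- key strong inequality
  have main : ∀ v : Fin k → ℝ, (∀ i, 0 ≤ v i) → ∑ i, v i = 1 →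
      (1 / 2) * ∑ i, (a i * u i - y i) ^ 2
        + (1 / 2) * ∑ i, (a i) ^ 2 * (v i - u i) ^ 2
        ≤ (1 / 2) * ∑ i, (a i * v i - y i) ^ 2 := by
    intro v hv hsv
    have hterm : ∀ i : Fin k,
        0 ≤ ((a i) ^ 2 * u i - a i * y i) * (v i - u i) + lam * (v i - u i) := by
      intro i
      have ha2 : (0:ℝ) < (a i) ^ 2 := pow_pos (ha i) 2
      rcases le_or_gt (a i * y i - lam) 0 with h | h
      · have hu0 : u i = 0 := by
          rw [hu i]; exact max_eq_right (div_nonpos_of_nonpos_of_nonneg h (le_of_lt ha2))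
        rw [hu0]
        have := hv i
        nlinarith
      · have hueq : u i = (a i * y i - lam) / (a i) ^ 2 := by
          rw [hu i]; exact max_eq_left (le_of_lt (div_pos h ha2))
        have e : (a i) ^ 2 * u i = a i * y i - lam := by
          rw [hueq]; field_simp [(ha i).ne']
        have key : ((a i) ^ 2 * u i - a i * y i) * (v i - u i)
            + lam * (v i - u i) = 0 := by linear_combination (v i - u i) * e
        linarith
    have expand : ∀ i : Fin k,
        (1/2) * (a i * v i - y i) ^ 2 - (1/2) * (a i * u i - y i) ^ 2
          - (1/2) * ((a i) ^ 2 * (v i - u i) ^ 2)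
          = ((a i) ^ 2 * u i - a i * y i) * (v i - u i) := by
      intro i; ring
    have h1 : 0 ≤ ∑ i, (((a i) ^ 2 * u i - a i * y i) * (v i - u i)
        + lam * (v i - u i)) := Finset.sum_nonneg (fun i _ => hterm i)
    rw [Finset.sum_add_distrib] at h1
    have h2 : ∑ i, lam * (v i - u i) = 0 := by
      rw [← Finset.mul_sum, Finset.sum_sub_distrib, hsv, hsum]; ring
    have h3 : 0 ≤ ∑ i, ((1/2) * (a i * v i - y i) ^ 2
        - (1/2) * (a i * u i - y i) ^ 2 - (1/2) * ((a i) ^ 2 * (v i - u i) ^ 2)) := by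
      simp_rw [expand]; linarith
    rw [Finset.sum_sub_distrib, Finset.sum_sub_distrib, ← Finset.mul_sum,
      ← Finset.mul_sum, ← Finset.mul_sum] at h3
    linarith
  refine ⟨⟨hnn, hsum⟩, ?_, ?_⟩
  · intro v hv hsv
    have h := main v hv hsv
    have : (0:ℝ) ≤ ∑ i, (a i) ^ 2 * (v i - u i) ^ 2 :=
      Finset.sum_nonneg (fun i _ => by positivity)
    linarith
  · intro v hv hsv hmin
    have h1 := main v hv hsv
    have h2 := hmin u hnn hsum
    have hz : ∑ i, (a i) ^ 2 * (v i - u i) ^ 2 = 0 := by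
      have : (0:ℝ) ≤ ∑ i, (a i) ^ 2 * (v i - u i) ^ 2 :=
        Finset.sum_nonneg (fun i _ => by positivity)
      linarith
    funext i
    have hi : (a i) ^ 2 * (v i - u i) ^ 2 = 0 :=
      (Finset.sum_eq_zero_iff_of_nonneg (fun j _ => by positivity)).mp hz i
        (Finset.mem_univ i)
    have ha2 : (0:ℝ) < (a i) ^ 2 := pow_pos (ha i) 2
    rcases mul_eq_zero.mp hi with h | h
    · exact absurd h ha2.ne'
    · have := sq_eq_zero_iff.mp h
      linarith
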